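/- arXiv:math/0602018 — 2 statements merged into one kernel-verified Lean document; each statement's English description precedes it below -/
import Mathlib

section
/- Let W = L ⊕ K with dim L = 1 and dim K = n−1, let β : W → W be the projection onto K, and let 0 < r < n. Define Δ₊ = {(A,B) ∈ Gr(r,W)² : β(A) ⊆ B and L ⊆ A} and Δ₋ = {(A,B) ∈ Gr(r,W)² : β(A) ⊆ B and B ⊆ K}. If (A,B) ∈ Δ₊ and B ⊄ K, then the induced linear map β̄ : W/A → W/B is an isomorphism. -/
/-!
STATEMENT 1. W = L ⊕ K with dim L = 1, dim K = n-1, β : W → W the projection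
onto K (kernel L, identity on K), 0 < r < n.  If (A,B) ∈ Δ₊ (i.e. β(A) ⊆ B and
L ⊆ A) and B ⊄ K (i.e. (A,B) ∉ Δ₋), then the induced map W/A → W/B is an
isomorphism.
-/

open Module Submodule

theorem stmt1 (n r : ℕ) (hr : 0 < r) (hrn : r < n)
    (W : Type*) [AddCommGroup W] [Module ℂ W] [FiniteDimensional ℂ W]
    (hW : finrank ℂ W = n)
    (L K : Submodule ℂ W) (hLK : IsCompl L K) (hL : finrank ℂ L = 1)
    (β : W →ₗ[ℂ] W) (hker : LinearMap.ker β = L) (hβK : ∀ x ∈ K, β x = x)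
    (A B : Submodule ℂ W) (hA : finrank ℂ A = r) (hB : finrank ℂ B = r)
    (hmap : A ≤ Submodule.comap β B) (hLA : L ≤ A) (hBK : ¬ B ≤ K) :
    Function.Bijective (Submodule.mapQ A B β hmap) := by
  -- K ⊔ B = ⊤
  have hKdim : finrank ℂ K = n - 1 := by
    have := Submodule.finrank_add_eq_of_isCompl hLK
    omega
  have hKB : K ⊔ B = ⊤ := by
    have hlt : K < K ⊔ B := by
      refine lt_of_le_of_ne le_sup_left fun h => hBK ?_
      rw [h]; exact le_sup_right
    have h1 := Submodule.finrank_lt_finrank_of_lt hlt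
    have h2 : finrank ℂ (K ⊔ B : Submodule ℂ W) ≤ finrank ℂ W :=
      Submodule.finrank_le _
    refine Submodule.eq_top_of_finrank_eq ?_
    omega
  have hsurj : Function.Surjective (Submodule.mapQ A B β hmap) := by
    intro y
    obtain ⟨w, rfl⟩ := Submodule.Quotient.mk_surjective B y
    have hw : w ∈ K ⊔ B := hKB ▸ Submodule.mem_top
    obtain ⟨k, hk, b, hb, rfl⟩ := Submodule.mem_sup.mp hw
    refine ⟨Submodule.Quotient.mk k, ?_⟩
    rw [Submodule.mapQ_apply, hβK k hk]
    symm
    rw [Submodule.Quotient.eq]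
    simpa using hb
  have hdim : finrank ℂ (W ⧸ A) = finrank ℂ (W ⧸ B) := by
    have h1 := Submodule.finrank_quotient_add_finrank A
    have h2 := Submodule.finrank_quotient_add_finrank B
    omega
  exact ⟨(LinearMap.injective_iff_surjective_of_finrank_eq_finrank hdim).mpr hsurj,
    hsurj⟩
end

section
/- Intersection-pairing duality of Schubert classes: for r-element subsets I, J of [n] with codim(ω_I) + codim(ω_J) = r(n−r), and for generic (transverse) complete flags E_•, F_• on an n-dimensional space W, the intersection Ω_I(E_•) ∩ Ω_J(F_•) in Gr(r,W) is a single reduced point if J = I' = {n+1−i : i ∈ I}, and is empty otherwise. -/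
/-!
STATEMENT 14 (duality of Schubert classes).  W an n-dimensional complex
vector space, E_•, F_• transverse complete flags (E_u ∩ F_{n−u} = 0), and
I, J r-element subsets of [n] (encoded by strictly increasing i, j : Fin r → ℕ
with values in [1,n]) with codim ω_I + codim ω_J = r(n−r), where
codim ω_I = Σ_a (n − r + a − i_a).  The Schubert variety Ω_I(E_•) is the set
of r-dimensional V with dim(V ∩ E_{i_a}) ≥ a for all a.  Then
Ω_I(E_•) ∩ Ω_J(F_•) is a single (reduced) point if J = I' = {n+1−i : i ∈ I},
and empty otherwise.
-/

open Module

theorem stmt14 (n r : ℕ) (hr : 0 < r) (hrn : r < n)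
    (W : Type*) [AddCommGroup W] [Module ℂ W] [FiniteDimensional ℂ W]
    (hW : finrank ℂ W = n)
    (E F : Fin (n + 1) → Submodule ℂ W)
    (hEmono : Monotone E) (hFmono : Monotone F)
    (hE : ∀ u, finrank ℂ (E u) = u) (hF : ∀ u, finrank ℂ (F u) = u)
    (htrans : ∀ u : Fin (n + 1), E u ⊓ F ⟨n - (u : ℕ), by omega⟩ = ⊥)
    (i j : Fin r → ℕ) (hi : StrictMono i) (hj : StrictMono j)
    (hib : ∀ a, 1 ≤ i a ∧ i a ≤ n) (hjb : ∀ a, 1 ≤ j a ∧ j a ≤ n)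
    (hcodim : (∑ a : Fin r, ((n : ℤ) - r + ((a : ℕ) : ℤ) + 1 - (i a : ℤ)))
            + (∑ a : Fin r, ((n : ℤ) - r + ((a : ℕ) : ℤ) + 1 - (j a : ℤ)))
          = (r : ℤ) * ((n : ℤ) - r)) :
    ((∀ a, j a = n + 1 - i a.rev) →
      ∃! V : Submodule ℂ W, finrank ℂ V = r ∧
        (∀ a : Fin r, (a : ℕ) + 1 ≤ finrank ℂ ↥(V ⊓ E ⟨i a, Nat.lt_succ_of_le (hib a).2⟩)) ∧
        (∀ a : Fin r, (a : ℕ) + 1 ≤ finrank ℂ ↥(V ⊓ F ⟨j a, Nat.lt_succ_of_le (hjb a).2⟩)))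
    ∧ ((∃ a, j a ≠ n + 1 - i a.rev) →
      ¬ ∃ V : Submodule ℂ W, finrank ℂ V = r ∧
        (∀ a : Fin r, (a : ℕ) + 1 ≤ finrank ℂ ↥(V ⊓ E ⟨i a, Nat.lt_succ_of_le (hib a).2⟩)) ∧
        (∀ a : Fin r, (a : ℕ) + 1 ≤ finrank ℂ ↥(V ⊓ F ⟨j a, Nat.lt_succ_of_le (hjb a).2⟩))) := by
  classical
  set e : ℕ → Submodule ℂ W := fun u => E ⟨min u n, by omega⟩ with he_def
  set f : ℕ → Submodule ℂ W := fun u => F ⟨min u n, by omega⟩ with hf_def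
  have he : ∀ u, finrank ℂ (e u) = min u n := by intro u; rw [he_def]; exact hE _
  have hf' : ∀ u, finrank ℂ (f u) = min u n := by intro u; rw [hf_def]; exact hF _
  have hemono : Monotone e := fun u v huv => hEmono (Fin.mk_le_mk.mpr (by omega))
  have hfmono : Monotone f := fun u v huv => hFmono (Fin.mk_le_mk.mpr (by omega))
  have hef : ∀ u v : ℕ, u + v ≤ n → e u ⊓ f v = ⊥ := by
    intro u v huv
    have h0 := htrans ⟨min u n, by omega⟩
    rw [eq_bot_iff]
    have h1 : f v ≤ F ⟨n - min u n, by omega⟩ := by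
      simp only [hf_def]
      exact hFmono (Fin.mk_le_mk.mpr (by omega))
    exact le_trans (inf_le_inf le_rfl h1) h0.le
  have hEi : ∀ a : Fin r, e (i a) = E ⟨i a, Nat.lt_succ_of_le (hib a).2⟩ := by
    intro a; rw [he_def]; exact congrArg E (Fin.ext (by simp [min_eq_left (hib a).2]))
  have hFj : ∀ a : Fin r, f (j a) = F ⟨j a, Nat.lt_succ_of_le (hjb a).2⟩ := by
    intro a; rw [hf_def]; exact congrArg F (Fin.ext (by simp [min_eq_left (hjb a).2]))
  have hrank_sup : ∀ A B : Submodule ℂ W, A ⊓ B = ⊥ →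
      finrank ℂ ↥(A ⊔ B) = finrank ℂ A + finrank ℂ B := by
    intro A B h
    have h2 := Submodule.finrank_sup_add_finrank_inf_eq A B
    rw [h, finrank_bot] at h2
    omega
  have harev : ∀ a : Fin r, (a.rev : ℕ) = r - 1 - (a : ℕ) := by
    intro a; rw [Fin.val_rev]; omega
  -- the sum identity
  have hsum : (∑ a : Fin r, ((i a : ℤ) + (j a.rev : ℤ))) = r * (n + 1) := by
    have h1 : (∑ a : Fin r, ((n:ℤ) - r + ((a.rev : ℕ) : ℤ) + 1 - (j a.rev : ℤ)))
        = ∑ a : Fin r, ((n:ℤ) - r + ((a : ℕ) : ℤ) + 1 - (j a : ℤ)) :=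
      Fintype.sum_equiv Fin.revPerm _ _ (fun a => by simp [Fin.revPerm])
    have h2 : ∀ a : Fin r, ((n:ℤ) - r + ((a:ℕ):ℤ) + 1 - (i a : ℤ))
        + ((n:ℤ) - r + ((a.rev:ℕ):ℤ) + 1 - (j a.rev : ℤ))
        = (2 * (n : ℤ) - r + 1) - ((i a : ℤ) + (j a.rev : ℤ)) := by
      intro a
      have h3 := harev a
      have h4 := a.isLt
      have h5 : ((a.rev : ℕ) : ℤ) = (r : ℤ) - 1 - ((a:ℕ) : ℤ) := by omega
      linarith
    have h3 : ∑ a : Fin r, ((2 * (n : ℤ) - r + 1) - ((i a : ℤ) + (j a.rev : ℤ)))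
        = (∑ a : Fin r, ((n:ℤ) - r + ((a:ℕ):ℤ) + 1 - (i a : ℤ)))
        + (∑ a : Fin r, ((n:ℤ) - r + ((a.rev:ℕ):ℤ) + 1 - (j a.rev : ℤ))) := by
      rw [← Finset.sum_add_distrib]
      exact Finset.sum_congr rfl fun a _ => (h2 a).symm
    rw [h1, hcodim, Finset.sum_sub_distrib, Finset.sum_const, Finset.card_univ,
      Fintype.card_fin, nsmul_eq_mul] at h3
    linear_combination (-1 : ℤ) * h3
  -- any valid V forces i a + j a.rev ≥ n + 1
  have hVt : ∀ V : Submodule ℂ W, finrank ℂ V = r →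
      (∀ a : Fin r, (a : ℕ) + 1 ≤ finrank ℂ ↥(V ⊓ e (i a))) →
      (∀ a : Fin r, (a : ℕ) + 1 ≤ finrank ℂ ↥(V ⊓ f (j a))) →
      ∀ a : Fin r, n + 1 ≤ i a + j a.rev := by
    intro V hV hVE hVF a
    by_contra hcon
    push_neg at hcon
    have hdisj : (V ⊓ e (i a)) ⊓ (V ⊓ f (j a.rev)) = ⊥ := by
      rw [eq_bot_iff]
      exact le_trans (inf_le_inf inf_le_right inf_le_right) (hef _ _ (by omega)).le
    have h1 := hVE a
    have h2 := hVF a.rev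
    have h3 := hrank_sup _ _ hdisj
    have h4 : finrank ℂ ↥((V ⊓ e (i a)) ⊔ (V ⊓ f (j a.rev))) ≤ r :=
      (Submodule.finrank_mono (sup_le inf_le_left inf_le_left)).trans hV.le
    have h5 := harev a
    have h6 := a.isLt
    omega
  constructor
  · -- dual case: unique point
    intro hJ
    have hJ' : ∀ a : Fin r, j a.rev = n + 1 - i a := fun a => by
      rw [hJ a.rev, Fin.rev_rev]
    set L : Fin r → Submodule ℂ W := fun a => e (i a) ⊓ f (n + 1 - i a) with hL_def
    have hL1 : ∀ a, finrank ℂ (L a) = 1 := by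
      intro a
      obtain ⟨hia1, hian⟩ := hib a
      have hLa : L a = e (i a) ⊓ f (n + 1 - i a) := by simp only [hL_def]
      have hlow : 1 ≤ finrank ℂ (L a) := by
        have h1 := Submodule.finrank_sup_add_finrank_inf_eq (e (i a)) (f (n + 1 - i a))
        have h2 : finrank ℂ ↥(e (i a) ⊔ f (n + 1 - i a)) ≤ n := by
          rw [← hW]; exact Submodule.finrank_le _
        rw [he, hf'] at h1
        rw [hLa]
        omega
      have hup : finrank ℂ (L a) ≤ 1 := by
        rw [hLa]
        have hMd : (e (i a) ⊓ f (n + 1 - i a)) ⊓ f (n - i a) = ⊥ := by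
          rw [eq_bot_iff]
          exact le_trans (inf_le_inf inf_le_left le_rfl) (hef _ _ (by omega)).le
        have h1 := hrank_sup _ _ hMd
        have h2 : finrank ℂ ↥((e (i a) ⊓ f (n + 1 - i a)) ⊔ f (n - i a)) ≤ n + 1 - i a := by
          have h3 : (e (i a) ⊓ f (n + 1 - i a)) ⊔ f (n - i a) ≤ f (n + 1 - i a) :=
            sup_le inf_le_right (hfmono (by omega))
          have h4 := Submodule.finrank_mono h3
          rw [hf'] at h4
          omega
        rw [hf'] at h1
        omega
      omega
    have hLsup : ∀ s : Finset (Fin r), finrank ℂ (⨆ a ∈ s, L a : Submodule ℂ W) = s.card := by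
      intro s
      induction s using Finset.induction_on_max with
      | empty => simp
      | insert b s hmax ih =>
        have hsub : (⨆ a ∈ s, L a : Submodule ℂ W) ≤ e (i b - 1) := by
          refine iSup_le fun a => iSup_le fun ha => ?_
          have h1 : i a < i b := hi (hmax a ha)
          exact le_trans inf_le_left (hemono (by omega))
        have hdisjb : L b ⊓ (⨆ a ∈ s, L a) = ⊥ := by
          rw [eq_bot_iff]
          refine le_trans (inf_le_inf (inf_le_right : L b ≤ f (n + 1 - i b)) hsub) ?_
          rw [inf_comm]
          exact (hef (i b - 1) (n + 1 - i b) (by obtain ⟨h1, h2⟩ := hib b; omega)).le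
        rw [Finset.iSup_insert, hrank_sup _ _ hdisjb, hL1, ih,
          Finset.card_insert_of_notMem (fun h => lt_irrefl b (hmax b h))]
        omega
    set V₀ : Submodule ℂ W := ⨆ a ∈ (Finset.univ : Finset (Fin r)), L a with hV₀_def
    have hV₀r : finrank ℂ V₀ = r := by
      rw [hV₀_def, hLsup, Finset.card_univ, Fintype.card_fin]
    have hLleV₀ : ∀ a, L a ≤ V₀ := by
      intro a
      rw [hV₀_def]
      exact le_biSup _ (Finset.mem_univ a)
    have hcondE : ∀ a : Fin r, (a : ℕ) + 1 ≤ finrank ℂ ↥(V₀ ⊓ e (i a)) := by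
      intro a
      have hle : (⨆ b ∈ Finset.Iic a, L b : Submodule ℂ W) ≤ V₀ ⊓ e (i a) := by
        refine le_inf (iSup_le fun b => iSup_le fun _ => hLleV₀ b)
          (iSup_le fun b => iSup_le fun hb => ?_)
        have h1 : i b ≤ i a := hi.monotone (Finset.mem_Iic.mp hb)
        exact le_trans inf_le_left (hemono h1)
      have h2 := Submodule.finrank_mono hle
      rw [hLsup, Fin.card_Iic] at h2
      exact h2
    have hcondF : ∀ a : Fin r, (a : ℕ) + 1 ≤ finrank ℂ ↥(V₀ ⊓ f (j a)) := by
      intro a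
      have hle : (⨆ b ∈ Finset.Ici a.rev, L b : Submodule ℂ W) ≤ V₀ ⊓ f (j a) := by
        refine le_inf (iSup_le fun b => iSup_le fun _ => hLleV₀ b)
          (iSup_le fun b => iSup_le fun hb => ?_)
        have h1 : b.rev ≤ a := by
          have h0 := Finset.mem_Ici.mp hb
          rw [← Fin.rev_rev a]
          exact Fin.rev_le_rev.mpr h0
        have h2 : j b.rev ≤ j a := hj.monotone h1
        refine le_trans (inf_le_right : L b ≤ f (n + 1 - i b)) ?_
        rw [← hJ' b]
        exact hfmono h2
      have h2 := Submodule.finrank_mono hle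
      rw [hLsup, Fin.card_Ici] at h2
      have h3 := harev a
      have h4 := a.isLt
      omega
    refine ⟨V₀, ⟨hV₀r, fun a => ?_, fun a => ?_⟩, ?_⟩
    · rw [← hEi a]; exact hcondE a
    · rw [← hFj a]; exact hcondF a
    · rintro V ⟨hV, hVE, hVF⟩
      have hVE' : ∀ a : Fin r, (a : ℕ) + 1 ≤ finrank ℂ ↥(V ⊓ e (i a)) := fun a => by
        rw [hEi a]; exact hVE a
      have hVF' : ∀ a : Fin r, (a : ℕ) + 1 ≤ finrank ℂ ↥(V ⊓ f (j a)) := fun a => by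
        rw [hFj a]; exact hVF a
      have hLa : ∀ a, L a ≤ V := by
        intro a
        have hA := hVE' a
        have hB := hVF' a.rev
        rw [hJ' a] at hB
        have hABeq : (V ⊓ e (i a)) ⊓ (V ⊓ f (n + 1 - i a)) = V ⊓ L a := by
          rw [hL_def]
          exact (inf_inf_distrib_left V (e (i a)) (f (n + 1 - i a))).symm
        have hsupc := Submodule.finrank_sup_add_finrank_inf_eq (V ⊓ e (i a)) (V ⊓ f (n + 1 - i a))
        rw [hABeq] at hsupc
        have hsuple : finrank ℂ ↥((V ⊓ e (i a)) ⊔ (V ⊓ f (n + 1 - i a))) ≤ r := by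
          rw [← hV]
          exact Submodule.finrank_mono (sup_le inf_le_left inf_le_left)
        have hge1 : 1 ≤ finrank ℂ ↥(V ⊓ L a) := by
          have h5 := harev a
          have h6 := a.isLt
          omega
        have heq := Submodule.eq_of_le_of_finrank_le (inf_le_right : V ⊓ L a ≤ L a)
          (by rw [hL1 a]; exact hge1)
        rw [← heq]
        exact inf_le_left
      have hle : V₀ ≤ V := by
        rw [hV₀_def]
        exact iSup_le fun a => iSup_le fun _ => hLa a
      exact (Submodule.eq_of_le_of_finrank_le hle (by rw [hV₀r, hV])).symm
  · -- non-dual case: empty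
    rintro ⟨a₀, ha₀⟩ ⟨V, hV, hVE, hVF⟩
    have hVE' : ∀ a : Fin r, (a : ℕ) + 1 ≤ finrank ℂ ↥(V ⊓ e (i a)) := fun a => by
      rw [hEi a]; exact hVE a
    have hVF' : ∀ a : Fin r, (a : ℕ) + 1 ≤ finrank ℂ ↥(V ⊓ f (j a)) := fun a => by
      rw [hFj a]; exact hVF a
    have hge : ∀ a : Fin r, (n + 1 : ℤ) ≤ (i a : ℤ) + (j a.rev : ℤ) := fun a => by
      exact_mod_cast hVt V hV hVE' hVF' a
    have hstrict : (n + 1 : ℤ) < (i a₀.rev : ℤ) + (j (a₀.rev).rev : ℤ) := by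
      have h := hge a₀.rev
      rcases h.lt_or_eq with h1 | h1
      · exact h1
      · exfalso
        apply ha₀
        rw [Fin.rev_rev] at h1
        have h2 := (hib a₀.rev).2
        omega
    have hlt : (∑ _a : Fin r, (n + 1 : ℤ)) < ∑ a : Fin r, ((i a : ℤ) + (j a.rev : ℤ)) :=
      Finset.sum_lt_sum (fun a _ => hge a) ⟨a₀.rev, Finset.mem_univ _, hstrict⟩
    rw [hsum, Finset.sum_const, Finset.card_univ, Fintype.card_fin, nsmul_eq_mul] at hlt
    linarith
end
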